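/- Let N be an even positive integer and p an integer with 2 ≤ p ≤ N/2; assume u^p[2n]² + v^p[2n]² > 0 for every n. Define the quasi-analytic wavelet packets Ψ_{±,λ} = ψ_{[1],λ}^p ± i·C(ψ_{[1],λ}^p), λ = 0,1. Then for every x ∈ Π[N] and every k: Σ_{λ=0}^{1} Σ_{l=0}^{N/2−1} ⟨x, Ψ_{+,λ}[·−2l]⟩·Ψ_{+,λ}[k−2l] = 2·(x[k] + i·H(x)[k]) and Σ_{λ=0}^{1} Σ_{l=0}^{N/2−1} ⟨x, Ψ_{−,λ}[·−2l]⟩·Ψ_{−,λ}[k−2l] = 2·(x[k] − i·H(x)[k]). In particular, for real-valued x, x equals the real part of (1/2)·Σ_{λ,l} ⟨x, Ψ_{±,λ}[·−2l]⟩·Ψ_{±,λ}[·−2l]. -/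

import Mathlib

/-!
The DFT diagonalises everything. Summing the shifts by `2l` aliases frequency `n` only with
`n + N/2`, so a two-channel system with DFTs `ĝ₀, ĝ₁` has frame operator the Fourier multiplier
`(|ĝ₀|² + |ĝ₁|²)/2` as soon as the cross terms `conj ĝ₀[n] ĝ₀[n+N/2] + conj ĝ₁[n] ĝ₁[n+N/2]`
vanish. For `Ψ_{±,λ}` one has `ĝ_λ = (1 ± i ĉ) ψ̂_λ` with `ĉ` the multiplier of `C`, and
`|1 ± i ĉ[n]|² = 2 (1 ± i ĥ[n])` with `ĥ` the multiplier of `H`. The polyphase identity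
`b̂_{[1]}[n] = (u[2n] + v[2n])/2`, with `u` periodic and `v` antiperiodic of period `N`, gives
`β[n]² + β[n+N/2]² = 2`; `β` is real since the B-spline is even, so `|β|² + |α|² = 2`, and the
cross terms cancel because `ω^{N/2} = -1`.
-/

open MeasureTheory

namespace WP

/-- The root of unity ω = e^{2πi/N}. -/
noncomputable def ww (N : ℕ) : ℂ := Complex.exp (2 * Real.pi * Complex.I / N)

/-- DFT of a signal `x ∈ Π[N]`: x̂[n] = Σ_{k=0}^{N−1} ω^{−kn} x[k]. -/
noncomputable def dft (N : ℕ) (x : ℤ → ℂ) (n : ℤ) : ℂ :=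
  ∑ k ∈ Finset.range N, ww N ^ (-((k : ℤ) * n)) * x k

/-- Inner product on `Π[N]`. -/
noncomputable def inner1 (N : ℕ) (x y : ℤ → ℂ) : ℂ :=
  ∑ k ∈ Finset.range N, x k * (starRingEnd ℂ) (y k)

/-- The discrete periodic Hilbert transform, defined via the DFT:
    Ĥ(x)[n] = −i·x̂[n] for 0<n<N/2, i·x̂[n] for N/2<n<N, 0 at n=0 and n=N/2. -/
noncomputable def hilbertT (N : ℕ) (x : ℤ → ℂ) (k : ℤ) : ℂ :=
  (N : ℂ)⁻¹ * ∑ n ∈ Finset.range N,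
    (if 0 < n ∧ n < N / 2 then -Complex.I else if N / 2 < n ∧ n < N then Complex.I else 0) *
      dft N x n * ww N ^ ((k * (n : ℤ)))

/-- The complementary-WP operator `C`, defined via the DFT:
    Ĉ(x)[n] = −i·x̂[n] for 0<n<N/2, i·x̂[n] for N/2<n<N, x̂[0] at 0, x̂[N/2] at N/2. -/
noncomputable def cwpT (N : ℕ) (x : ℤ → ℂ) (k : ℤ) : ℂ :=
  (N : ℂ)⁻¹ * ∑ n ∈ Finset.range N,
    (if n = 0 ∨ n = N / 2 then 1 else if n < N / 2 then -Complex.I else Complex.I) *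
      dft N x n * ww N ^ ((k * (n : ℤ)))

/-- The order-p B-spline b^p(t). -/
noncomputable def bspline (p : ℕ) (t : ℝ) : ℝ :=
  (1 / (Nat.factorial (p - 1) : ℝ)) *
    ∑ k ∈ Finset.range (p + 1),
      (-1 : ℝ) ^ k * (p.choose k : ℝ) * max (t + (p : ℝ) / 2 - (k : ℝ)) 0 ^ (p - 1)

/-- u^p[n] = Σ_{k=−N/2}^{N/2−1} ω^{−kn} b^p(k). -/
noncomputable def uSeq (N p : ℕ) (n : ℤ) : ℂ :=
  ∑ k ∈ Finset.range N,
    ww N ^ (-(((k : ℤ) - (N : ℤ) / 2) * n)) * (bspline p ((k : ℝ) - (N : ℝ) / 2) : ℂ)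

/-- v^p[n] = e^{−πin/N} Σ_{k=−N/2}^{N/2−1} ω^{−kn} b^p(k+1/2). -/
noncomputable def vSeq (N p : ℕ) (n : ℤ) : ℂ :=
  Complex.exp (-Real.pi * Complex.I * n / N) *
    ∑ k ∈ Finset.range N,
      ww N ^ (-(((k : ℤ) - (N : ℤ) / 2) * n)) *
        (bspline p ((k : ℝ) - (N : ℝ) / 2 + 1 / 2) : ℂ)

/-- The span-two discrete-time B-spline b_{[1]}^p ∈ Π[N]:
    the N-periodic signal with b_{[1]}^p[k] = b^p(k/2)/2 for −N/2 ≤ k ≤ N/2−1. -/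
noncomputable def bs1 (N p : ℕ) (k : ℤ) : ℂ :=
  ((bspline p ((((k + (N : ℤ) / 2) % (N : ℤ) - (N : ℤ) / 2 : ℤ) : ℝ) / 2) : ℝ) : ℂ) / 2

/-- Its DFT b̂_{[1]}^p[n] = Σ_{k=−N/2}^{N/2−1} ω^{−kn} b_{[1]}^p[k]. -/
noncomputable def bhat1 (N p : ℕ) (n : ℤ) : ℂ :=
  ∑ k ∈ Finset.range N,
    ww N ^ (-(((k : ℤ) - (N : ℤ) / 2) * n)) * bs1 N p ((k : ℤ) - (N : ℤ) / 2)

/-- Υ^p[n] = (u^p[2n]² + v^p[2n]²)/4. -/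
noncomputable def upsilon (N p : ℕ) (n : ℤ) : ℂ :=
  (uSeq N p (2 * n) ^ 2 + vSeq N p (2 * n) ^ 2) / 4

/-- β[n] = b̂_{[1]}^p[n] / √(Υ^p[n]). -/
noncomputable def betaS (N p : ℕ) (n : ℤ) : ℂ := bhat1 N p n / upsilon N p n ^ ((1 : ℂ) / 2)

/-- α[n] = ω^n · β[n+N/2]. -/
noncomputable def alphaS (N p : ℕ) (n : ℤ) : ℂ := ww N ^ n * betaS N p (n + (N : ℤ) / 2)

/-- The first-level wavelet packets ψ_{[1],λ}^p, λ = 0,1, defined via their DFTs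
    ψ̂_{[1],0}^p[n] = β[n] and ψ̂_{[1],1}^p[n] = α[n]. -/
noncomputable def psi1 (N p lam : ℕ) (k : ℤ) : ℂ :=
  (N : ℂ)⁻¹ * ∑ n ∈ Finset.range N,
    (if lam = 0 then betaS N p n else alphaS N p n) * ww N ^ ((k * (n : ℤ)))


open scoped ComplexOrder

/-- The first-level quasi-analytic wavelet packets Ψ_{±,λ} = ψ_{[1],λ}^p ± i·C(ψ_{[1],λ}^p). -/
noncomputable def qwpP (N p lam : ℕ) (k : ℤ) : ℂ :=
  psi1 N p lam k + Complex.I * cwpT N (psi1 N p lam) k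

noncomputable def qwpM (N p lam : ℕ) (k : ℤ) : ℂ :=
  psi1 N p lam k - Complex.I * cwpT N (psi1 N p lam) k


open Finset ComplexConjugate Function

lemma ww_ne_zero (N : ℕ) : ww N ≠ 0 := Complex.exp_ne_zero _

lemma isPrimitiveRoot_ww {N : ℕ} (hN : N ≠ 0) : IsPrimitiveRoot (ww N) N :=
  Complex.isPrimitiveRoot_exp N hN

lemma ww_zpow_natCast_self (N : ℕ) : ww N ^ (N : ℤ) = 1 := by
  rcases eq_or_ne N 0 with rfl | hN
  · simp
  · rw [zpow_natCast, (isPrimitiveRoot_ww hN).pow_eq_one]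

lemma ww_zpow_add_mul_natCast (N : ℕ) (a b : ℤ) : ww N ^ (a + b * N) = ww N ^ a := by
  rw [zpow_add₀ (ww_ne_zero N), zpow_mul', ww_zpow_natCast_self, one_zpow, mul_one]

lemma conj_ww_zpow (N : ℕ) (m : ℤ) : conj (ww N ^ m) = ww N ^ (-m) := by
  have h : conj (ww N) = (ww N)⁻¹ := by
    rw [ww, ← Complex.exp_conj, ← Complex.exp_neg]
    congr 1
    simp only [map_div₀, map_mul, Complex.conj_I, map_natCast, map_ofNat, Complex.conj_ofReal]
    ring
  rw [map_zpow₀, h, inv_zpow, zpow_neg]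

lemma ww_zpow_half {N M : ℕ} (hNM : N = 2 * M) (hM : M ≠ 0) : ww N ^ (M : ℤ) = -1 := by
  rw [ww, ← Complex.exp_int_mul, ← Complex.exp_pi_mul_I]
  congr 1
  subst hNM
  push_cast
  field_simp

lemma ww_sq {N M : ℕ} (hNM : N = 2 * M) : ww N ^ 2 = ww M := by
  rw [ww, ww, ← Complex.exp_nat_mul]
  congr 1
  subst hNM
  rcases eq_or_ne M 0 with rfl | hM
  · simp
  · push_cast
    field_simp

lemma sum_range_ww_zpow_mul {N : ℕ} (hN : N ≠ 0) (d : ℤ) :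
    ∑ k ∈ range N, ww N ^ ((k : ℤ) * d) = if (N : ℤ) ∣ d then (N : ℂ) else 0 := by
  have hζ := isPrimitiveRoot_ww hN
  simp_rw [mul_comm _ d, zpow_mul, zpow_natCast]
  split_ifs with h
  · simp [(hζ.zpow_eq_one_iff_dvd d).2 h]
  · rw [geom_sum_eq (mt (hζ.zpow_eq_one_iff_dvd d).1 h), ← zpow_natCast, ← zpow_mul,
      mul_comm, zpow_mul, ww_zpow_natCast_self, one_zpow, sub_self, zero_div]

lemma natCast_dvd_sub_iff {N a b : ℕ} (ha : a < N) (hb : b < N) :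
    (N : ℤ) ∣ (a : ℤ) - b ↔ a = b :=
  ⟨fun h ↦ (Nat.modEq_iff_dvd.2 h).symm.eq_of_lt_of_lt ha hb, by rintro rfl; simp⟩

noncomputable def idft (N : ℕ) (c : ℕ → ℂ) (k : ℤ) : ℂ :=
  (N : ℂ)⁻¹ * ∑ n ∈ range N, c n * ww N ^ (k * (n : ℤ))

lemma dft_idft {N : ℕ} (c : ℕ → ℂ) {m : ℕ} (hm : m < N) : dft N (idft N c) m = c m := by
  have hN : N ≠ 0 := by omega
  calc dft N (idft N c) m
      = ∑ n ∈ range N, (N : ℂ)⁻¹ * c n * ∑ j ∈ range N, ww N ^ ((j : ℤ) * ((n : ℤ) - m)) := by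
        simp only [dft, idft, mul_sum]
        rw [sum_comm]
        refine sum_congr rfl fun n _ ↦ sum_congr rfl fun j _ ↦ ?_
        rw [show (j : ℤ) * ((n : ℤ) - m) = -(j * m) + j * n by ring, zpow_add₀ (ww_ne_zero N)]
        ring
    _ = ∑ n ∈ range N, if n = m then c n else 0 := by
        refine sum_congr rfl fun n hn ↦ ?_
        rw [sum_range_ww_zpow_mul hN]
        simp only [natCast_dvd_sub_iff (mem_range.1 hn) hm]
        split_ifs with h
        · subst h; field_simp
        · simp
    _ = c m := by simp [hm]

lemma sum_range_mul_ite_natCast_dvd_sub {N : ℕ} (hN : N ≠ 0) {F : ℤ → ℂ} (hF : Periodic F N)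
    (k : ℤ) : ∑ j ∈ range N, F j * (if (N : ℤ) ∣ k - j then (N : ℂ) else 0) = N * F k := by
  have hN' : (0 : ℤ) < N := by omega
  have hk : k % N = ((k % N).toNat : ℕ) := (Int.toNat_of_nonneg (Int.emod_nonneg k hN'.ne')).symm
  have key : ∀ j ∈ range N, (N : ℤ) ∣ k - j ↔ j = (k % N).toNat := fun j hj ↦ by
    rw [← Int.modEq_iff_dvd, Int.ModEq, Int.emod_eq_of_lt (by omega) (by simpa using hj), hk]
    omega
  have hmod : F (k % N) = F k := by
    rw [Int.emod_def, mul_comm, ← smul_eq_mul, hF.sub_zsmul_eq]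
  simp_rw [mul_ite, mul_zero]
  rw [sum_congr rfl fun j hj ↦ if_congr (key j hj) rfl rfl, sum_ite_eq', if_pos, ← hk, hmod,
    mul_comm]
  simp only [mem_range]
  have := Int.emod_lt_of_pos k hN'
  omega

lemma idft_dft {N : ℕ} (hN : N ≠ 0) {x : ℤ → ℂ} (hx : Periodic x N) (k : ℤ) :
    idft N (fun n ↦ dft N x n) k = x k := by
  calc idft N (fun n ↦ dft N x n) k
      = (N : ℂ)⁻¹ * ∑ j ∈ range N, x j * (if (N : ℤ) ∣ k - j then (N : ℂ) else 0) := by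
        simp only [idft, dft, sum_mul]
        rw [sum_comm]
        congr 1
        refine sum_congr rfl fun j _ ↦ ?_
        rw [← sum_range_ww_zpow_mul hN, mul_sum]
        refine sum_congr rfl fun n _ ↦ ?_
        rw [show (n : ℤ) * (k - j) = -(j * n) + k * n by ring, zpow_add₀ (ww_ne_zero N)]
        ring
    _ = x k := by
        rw [sum_range_mul_ite_natCast_dvd_sub hN hx]
        field_simp

lemma inner1_idft_sub (N : ℕ) (x : ℤ → ℂ) (c : ℕ → ℂ) (a : ℤ) :
    inner1 N x (fun j ↦ idft N c (j - a))
      = (N : ℂ)⁻¹ * ∑ n ∈ range N, conj (c n) * dft N x n * ww N ^ (a * n) := by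
  simp only [inner1, idft, dft, map_mul, map_sum, map_inv₀, map_natCast, conj_ww_zpow, mul_sum,
    sum_mul]
  rw [sum_comm]
  refine sum_congr rfl fun n _ ↦ sum_congr rfl fun j _ ↦ ?_
  rw [show -((j - a) * (n : ℤ)) = a * n + -(j * n) by ring, zpow_add₀ (ww_ne_zero N)]
  ring

lemma periodic_sum_ww_zpow_neg_mul {α : Type*} (N : ℕ) (s : Finset α) (a : α → ℤ) (c : α → ℂ) :
    Periodic (fun n : ℤ ↦ ∑ k ∈ s, ww N ^ (-(a k * n)) * c k) N := fun n ↦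
  sum_congr rfl fun k _ ↦ by
    rw [show -(a k * (n + N)) = -(a k * n) + -a k * N by ring, ww_zpow_add_mul_natCast]

lemma periodic_dft (N : ℕ) (x : ℤ → ℂ) : Periodic (dft N x) N :=
  periodic_sum_ww_zpow_neg_mul N _ _ _

lemma conj_dft {N : ℕ} {x : ℤ → ℂ} (hx : ∀ k, (x k).im = 0) (n : ℤ) :
    conj (dft N x n) = dft N x (-n) := by
  simp only [dft, map_sum, map_mul, conj_ww_zpow, Complex.conj_eq_iff_im.2 (hx _), neg_neg,
    mul_neg]

lemma idft_im_eq_zero {N : ℕ} {c : ℕ → ℂ} (hc₀ : c 0 = 0)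
    (hc : ∀ n, 0 < n → n < N → conj (c n) = c (N - n)) (k : ℤ) : (idft N c k).im = 0 := by
  rcases Nat.eq_zero_or_pos N with rfl | hN
  · simp [idft]
  rw [← Complex.conj_eq_iff_im, idft, map_mul, map_inv₀, map_natCast, map_sum,
    sum_range_eq_add_Ico _ hN, sum_range_eq_add_Ico _ hN]
  simp only [hc₀, map_mul, map_zero, zero_mul, zero_add]
  congr 1
  have hreflect := sum_Ico_reflect (fun n ↦ c n * ww N ^ (k * n)) 1 (Nat.le_succ N)
  rw [Nat.add_sub_cancel_left, Nat.add_sub_cancel] at hreflect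
  rw [← hreflect]
  refine sum_congr rfl fun n hn ↦ ?_
  rw [mem_Ico] at hn
  rw [hc n hn.1 hn.2, conj_ww_zpow, show k * ((N - n : ℕ) : ℤ) = -(k * n) + k * N by
    rw [Nat.cast_sub hn.2.le]; ring, ww_zpow_add_mul_natCast]

def shiftHalf (M n : ℕ) : ℕ := if n < M then n + M else n - M

lemma natCast_dvd_sub_iff_eq_or_eq_shiftHalf {M n m : ℕ} (hn : n < 2 * M) (hm : m < 2 * M) :
    (M : ℤ) ∣ (n : ℤ) - m ↔ m = n ∨ m = shiftHalf M n := by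
  constructor
  · intro h
    -- one of `n - m`, `n - m - M`, `n - m + M` lies in `(-M, M)`, so it vanishes
    have h0 := fun hlt ↦ Int.eq_zero_of_abs_lt_dvd h hlt
    have h1 := fun hlt ↦ Int.eq_zero_of_abs_lt_dvd (dvd_sub h (dvd_refl (M : ℤ))) hlt
    have h2 := fun hlt ↦ Int.eq_zero_of_abs_lt_dvd (dvd_add h (dvd_refl (M : ℤ))) hlt
    simp only [abs_lt] at h0 h1 h2
    unfold shiftHalf
    split_ifs <;> omega
  · unfold shiftHalf
    rintro (rfl | rfl)
    · simp
    · split_ifs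
      · exact ⟨-1, by push_cast; ring⟩
      · exact ⟨1, by omega⟩

lemma sum_range_ite_natCast_dvd_sub {N M n : ℕ} (hNM : N = 2 * M) (hn : n < N) (F : ℕ → ℂ) :
    ∑ m ∈ range N, (if (M : ℤ) ∣ (n : ℤ) - m then F m else 0) = F n + F (shiftHalf M n) := by
  subst hNM
  have hσ : shiftHalf M n < 2 * M := by unfold shiftHalf; split_ifs <;> omega
  have hne : n ≠ shiftHalf M n := by unfold shiftHalf; split_ifs <;> omega
  rw [← sum_filter, sum_congr (s₂ := {n, shiftHalf M n}) _ fun _ _ ↦ rfl, sum_pair hne]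
  ext m
  simp only [mem_filter, mem_range, mem_insert, mem_singleton]
  constructor
  · rintro ⟨hm, h⟩
    exact (natCast_dvd_sub_iff_eq_or_eq_shiftHalf hn hm).1 h
  · intro h
    have hm : m < 2 * M := by rcases h with rfl | rfl <;> assumption
    exact ⟨hm, (natCast_dvd_sub_iff_eq_or_eq_shiftHalf hn hm).2 h⟩

lemma periodic_apply_shiftHalf {α : Type*} {N M : ℕ} (hNM : N = 2 * M) {f : ℤ → α}
    (hf : Periodic f N) (n : ℕ) : f (shiftHalf M n) = f (n + M) := by
  unfold shiftHalf
  split_ifs with h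
  · push_cast
    rfl
  · rw [← hf]
    congr 1
    omega

lemma sum_range_ww_two_mul_zpow {N M : ℕ} (hNM : N = 2 * M) (hM : M ≠ 0) (d : ℤ) :
    ∑ l ∈ range M, ww N ^ (2 * (l : ℤ) * d) = if (M : ℤ) ∣ d then (M : ℂ) else 0 := by
  rw [← sum_range_ww_zpow_mul hM d]
  refine sum_congr rfl fun l _ ↦ ?_
  rw [mul_assoc, zpow_mul, zpow_ofNat, ww_sq hNM]

lemma sum_range_inner1_idft_mul_idft {N M : ℕ} (hNM : N = 2 * M) (x : ℤ → ℂ) (g : ℕ → ℂ)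
    (k : ℤ) :
    ∑ l ∈ range M, inner1 N x (fun j ↦ idft N g (j - 2 * l)) * idft N g (k - 2 * l)
      = (2 * N : ℂ)⁻¹ * ∑ n ∈ range N, conj (g n) * dft N x n *
          (g n * ww N ^ (k * n) + g (shiftHalf M n) * ww N ^ (k * shiftHalf M n)) := by
  obtain rfl | hM := eq_or_ne M 0
  · simp [hNM]
  have hw := ww_ne_zero N
  calc _ = ∑ n ∈ range N, ∑ m ∈ range N, (N : ℂ)⁻¹ * (N : ℂ)⁻¹ * (conj (g n) * dft N x n) *
          (g m * ww N ^ (k * m)) * ∑ l ∈ range M, ww N ^ (2 * (l : ℤ) * (n - m)) := by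
        simp only [inner1_idft_sub]
        simp only [idft, mul_sum, sum_mul]
        rw [sum_congr rfl fun _ _ ↦ sum_comm, sum_comm]
        refine sum_congr rfl fun n _ ↦ ?_
        rw [sum_comm]
        refine sum_congr rfl fun m _ ↦ sum_congr rfl fun l _ ↦ ?_
        rw [show ((k - 2 * l) * m : ℤ) = k * m + -(2 * l * m) by ring,
          show (2 * l * (n - m) : ℤ) = 2 * l * n + -(2 * l * m) by ring, zpow_add₀ hw, zpow_add₀ hw]
        ring
    _ = ∑ n ∈ range N, (N : ℂ)⁻¹ * (N : ℂ)⁻¹ * (conj (g n) * dft N x n) * M *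
          (g n * ww N ^ (k * n) + g (shiftHalf M n) * ww N ^ (k * shiftHalf M n)) := by
        refine sum_congr rfl fun n hn ↦ ?_
        simp_rw [sum_range_ww_two_mul_zpow hNM hM, mul_ite, mul_zero]
        rw [sum_range_ite_natCast_dvd_sub hNM (mem_range.1 hn)]
        ring
    _ = _ := by
        rw [mul_sum]
        refine sum_congr rfl fun n _ ↦ ?_
        rw [hNM]
        push_cast
        field_simp

lemma sum_sum_range_inner1_idft_mul_idft {ι : Type*} (s : Finset ι) {N M : ℕ}
    (hNM : N = 2 * M) (g : ι → ℕ → ℂ) (d : ℕ → ℂ)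
    (hdiag : ∀ n < N, ∑ i ∈ s, conj (g i n) * g i n = d n)
    (hcross : ∀ n < N, ∑ i ∈ s, conj (g i n) * g i (shiftHalf M n) = 0) (x : ℤ → ℂ) (k : ℤ) :
    ∑ i ∈ s, ∑ l ∈ range M, inner1 N x (fun j ↦ idft N (g i) (j - 2 * l)) * idft N (g i) (k - 2 * l)
      = idft N (fun n ↦ d n / 2 * dft N x n) k := by
  simp only [sum_range_inner1_idft_mul_idft hNM]
  rw [← mul_sum, sum_comm, idft, mul_sum, mul_sum]
  refine sum_congr rfl fun n hn ↦ ?_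
  have hsplit : ∑ i ∈ s, conj (g i n) * dft N x n *
        (g i n * ww N ^ (k * n) + g i (shiftHalf M n) * ww N ^ (k * shiftHalf M n))
      = dft N x n * ww N ^ (k * n) * ∑ i ∈ s, conj (g i n) * g i n
        + dft N x n * ww N ^ (k * shiftHalf M n) * ∑ i ∈ s, conj (g i n) * g i (shiftHalf M n) := by
    simp only [mul_sum, ← sum_add_distrib]
    exact sum_congr rfl fun i _ ↦ by ring
  rw [hsplit, hdiag n (mem_range.1 hn), hcross n (mem_range.1 hn)]
  field_simp
  ring

noncomputable def hilbertMult (N n : ℕ) : ℂ :=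
  if 0 < n ∧ n < N / 2 then -Complex.I else if N / 2 < n ∧ n < N then Complex.I else 0

noncomputable def cwpMult (N n : ℕ) : ℂ :=
  if n = 0 ∨ n = N / 2 then 1 else if n < N / 2 then -Complex.I else Complex.I

lemma hilbertT_eq_idft (N : ℕ) (x : ℤ → ℂ) :
    hilbertT N x = idft N (fun n ↦ hilbertMult N n * dft N x n) := rfl

lemma hilbertT_im_eq_zero {N M : ℕ} (hNM : N = 2 * M) {x : ℤ → ℂ} (hx : ∀ k, (x k).im = 0)
    (k : ℤ) : (hilbertT N x k).im = 0 := by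
  rw [hilbertT_eq_idft]
  refine idft_im_eq_zero (by simp [hilbertMult]) (fun n hn hnN ↦ ?_) k
  rw [map_mul, conj_dft hx, ← periodic_dft N x (-n), show -(n : ℤ) + N = (N - n : ℕ) by omega]
  congr 1
  unfold hilbertMult
  split_ifs <;> first | omega | simp

lemma cwpT_idft (N : ℕ) (c : ℕ → ℂ) :
    cwpT N (idft N c) = idft N (fun n ↦ cwpMult N n * c n) := by
  funext k
  refine congrArg _ (sum_congr rfl fun n hn ↦ ?_)
  rw [dft_idft c (mem_range.1 hn)]
  rfl

lemma idft_add_mul_cwpT (N : ℕ) (c : ℕ → ℂ) (t : ℂ) (k : ℤ) :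
    idft N c k + t * cwpT N (idft N c) k = idft N (fun n ↦ (1 + t * cwpMult N n) * c n) k := by
  simp only [cwpT_idft, idft, mul_sum, ← sum_add_distrib]
  exact sum_congr rfl fun n _ ↦ by ring

lemma conj_mul_self_one_add_mul_cwpMult {N n : ℕ} (hn : n < N) {t : ℂ}
    (ht : t = Complex.I ∨ t = -Complex.I) :
    conj (1 + t * cwpMult N n) * (1 + t * cwpMult N n) = 2 * (1 + t * hilbertMult N n) := by
  unfold cwpMult hilbertMult
  rcases ht with rfl | rfl <;> split_ifs <;> first | omega | (simp [Complex.ext_iff]; try norm_num)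

lemma sum_range_neg_one_pow_mul_choose_mul_pow {p m : ℕ} (hm : m < p) (c : ℝ) :
    ∑ k ∈ range (p + 1), (-1 : ℝ) ^ k * p.choose k * (c - k) ^ m = 0 := by
  have h := congr_fun (fwdDiff_iter_pow_eq_zero_of_lt (R := ℝ) hm) (-c)
  rw [fwdDiff_iter_eq_sum_shift] at h
  rw [← mul_eq_zero_of_right ((-1 : ℝ) ^ (p + m)) h, mul_sum]
  refine sum_congr rfl fun k hk ↦ ?_
  obtain ⟨j, rfl⟩ := Nat.exists_eq_add_of_le (Nat.lt_succ_iff.1 (mem_range.1 hk))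
  simp only [Nat.add_sub_cancel_left, zsmul_eq_mul, nsmul_eq_mul, mul_one]
  push_cast
  have hj : (-1 : ℝ) ^ j * (-1) ^ j = 1 := by rw [← mul_pow]; norm_num
  rw [show c - k = (-1) * (-c + k) by ring, mul_pow, pow_add, pow_add]
  linear_combination (-(-1) ^ k * (-1) ^ m * ((k + j).choose k : ℝ) * (-c + k) ^ m) * hj

lemma max_pow_add_neg_one_pow_mul_max_neg_pow {m : ℕ} (hm : m ≠ 0) (y : ℝ) :
    max y 0 ^ m + (-1) ^ m * max (-y) 0 ^ m = y ^ m := by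
  rcases le_total y 0 with h | h
  · rw [max_eq_right h, max_eq_left (neg_nonneg.2 h), zero_pow hm, zero_add, ← mul_pow]
    simp
  · rw [max_eq_left h, max_eq_right (neg_nonpos.2 h), zero_pow hm, mul_zero, add_zero]

lemma bspline_neg {p : ℕ} (hp : 2 ≤ p) (t : ℝ) : bspline p (-t) = bspline p t := by
  obtain ⟨m, rfl⟩ : ∃ m, p = m + 1 := ⟨p - 1, by omega⟩
  have hm : m ≠ 0 := by omega
  unfold bspline
  congr 1
  simp only [Nat.add_sub_cancel]
  rw [← sum_range_reflect]
  calc _ = ∑ k ∈ range (m + 1 + 1), ((-1) ^ k * ((m + 1).choose k : ℝ) *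
          max (t + (m + 1 : ℕ) / 2 - k) 0 ^ m
        - (-1) ^ k * ((m + 1).choose k : ℝ) * (t + (m + 1 : ℕ) / 2 - k) ^ m) := by
        refine sum_congr rfl fun k hk ↦ ?_
        obtain ⟨j, hj⟩ := Nat.exists_eq_add_of_le (Nat.lt_succ_iff.1 (mem_range.1 hk))
        set y : ℝ := t + (m + 1 : ℕ) / 2 - k
        have hy : -t + (m + 1 : ℕ) / 2 - (m + 1 + 1 - 1 - k : ℕ) = -y := by
          rw [show m + 1 + 1 - 1 - k = j by omega, show (j : ℝ) = (m + 1 : ℕ) - k by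
            rw [hj]; push_cast; ring]
          ring
        have hkk : (-1 : ℝ) ^ k * (-1) ^ k = 1 := by rw [← mul_pow]; norm_num
        have hkj : (-1 : ℝ) ^ k * (-1) ^ j = -(-1) ^ m := by rw [← pow_add, ← hj, pow_succ]; ring
        rw [hy, show m + 1 + 1 - 1 - k = j by omega, ← Nat.choose_symm_of_eq_add hj]
        linear_combination (-(-1) ^ k * ((m + 1).choose k : ℝ)) *
            max_pow_add_neg_one_pow_mul_max_neg_pow hm y
          - ((m + 1).choose k * max (-y) 0 ^ m * (-1) ^ j) * hkk
          + ((m + 1).choose k * max (-y) 0 ^ m * (-1) ^ k) * hkj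
    _ = _ := by
        rw [sum_sub_distrib, sum_range_neg_one_pow_mul_choose_mul_pow (lt_add_one m), sub_zero]

lemma bspline_eq_zero_of_le {p : ℕ} (hp : 2 ≤ p) {t : ℝ} (ht : t ≤ -(p / 2)) : bspline p t = 0 := by
  unfold bspline
  rw [sum_eq_zero, mul_zero]
  intro k _
  have hk : t + p / 2 - k ≤ 0 := by linarith [(Nat.cast_nonneg k : (0 : ℝ) ≤ k)]
  rw [max_eq_right hk, zero_pow (by omega), mul_zero]

lemma bspline_eq_zero_of_le_abs {p : ℕ} (hp : 2 ≤ p) {t : ℝ} (ht : p / 2 ≤ |t|) :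
    bspline p t = 0 := by
  rcases le_abs'.1 ht with h | h
  · exact bspline_eq_zero_of_le hp h
  · rw [← bspline_neg hp]
    exact bspline_eq_zero_of_le hp (by linarith)

lemma bspline_div_two_eq_zero {p M : ℕ} (hp : 2 ≤ p) (hpM : p ≤ M) {j : ℤ} (hj : (M : ℤ) ≤ |j|) :
    bspline p (j / 2) = 0 := by
  refine bspline_eq_zero_of_le_abs hp ?_
  have hj' : (M : ℝ) ≤ |(j : ℝ)| := by exact_mod_cast hj
  have hpM' : (p : ℝ) ≤ M := by exact_mod_cast hpM
  rw [abs_div, abs_two]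
  linarith

lemma sum_Ico_two_mul (a b : ℤ) (f : ℤ → ℂ) :
    ∑ j ∈ Ico (2 * a) (2 * b), f j = ∑ i ∈ Ico a b, (f (2 * i) + f (2 * i + 1)) := by
  rw [← sum_fiberwise_of_maps_to (g := fun j ↦ j / 2) (t := Ico a b)
    fun j hj ↦ by simp only [mem_Ico] at hj ⊢; omega]
  refine sum_congr rfl fun i hi ↦ ?_
  rw [← sum_pair (show 2 * i ≠ 2 * i + 1 by omega)]
  congr 1
  ext j
  simp only [mem_filter, mem_Ico, mem_insert, mem_singleton] at hi ⊢
  omega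

lemma sum_Icc_neg (a : ℤ) (f : ℤ → ℂ) : ∑ j ∈ Icc (-a) a, f (-j) = ∑ j ∈ Icc (-a) a, f j := by
  refine sum_nbij' (fun j ↦ -j) (fun j ↦ -j) ?_ ?_ (fun j _ ↦ neg_neg j) (fun j _ ↦ neg_neg j)
    fun _ _ ↦ rfl <;> intro j hj <;> simp only [mem_Icc] at hj ⊢ <;> omega

lemma exp_neg_pi_mul_I_mul_two_mul_div {N M : ℕ} (hNM : N = 2 * M) (hM : M ≠ 0) (n : ℤ) :
    Complex.exp (-Real.pi * Complex.I * ((2 * n : ℤ) : ℂ) / N) = ww N ^ (-n) := by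
  rw [ww, ← Complex.exp_int_mul, hNM]
  congr 1
  push_cast
  field_simp

lemma sum_range_sub_half {N M : ℕ} (hNM : N = 2 * M) (f : ℤ → ℂ) :
    ∑ k ∈ range N, f (k - (N : ℤ) / 2) = ∑ j ∈ Ico (-(M : ℤ)) M, f j := by
  refine sum_nbij' (fun k ↦ k - (N : ℤ) / 2) (fun j ↦ (j + M).toNat) ?_ ?_ ?_ ?_ fun _ _ ↦ rfl <;>
    intro a ha <;> simp only [mem_range, mem_Ico] at ha ⊢ <;> omega

lemma uSeq_eq_sum_Ico {N M : ℕ} (hNM : N = 2 * M) (p : ℕ) (n : ℤ) :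
    uSeq N p n = ∑ j ∈ Ico (-(M : ℤ)) M, ww N ^ (-(j * n)) * (bspline p j : ℂ) := by
  rw [uSeq, ← sum_range_sub_half hNM]
  refine sum_congr rfl fun k _ ↦ ?_
  rw [show (N : ℤ) / 2 = M by omega, hNM]
  push_cast
  ring_nf

lemma vSeq_eq_sum_Ico {N M : ℕ} (hNM : N = 2 * M) (p : ℕ) (n : ℤ) :
    vSeq N p n = Complex.exp (-Real.pi * Complex.I * n / N) *
      ∑ j ∈ Ico (-(M : ℤ)) M, ww N ^ (-(j * n)) * (bspline p (j + 1 / 2) : ℂ) := by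
  rw [vSeq, ← sum_range_sub_half hNM]
  congr 1
  refine sum_congr rfl fun k _ ↦ ?_
  rw [show (N : ℤ) / 2 = M by omega, hNM]
  push_cast
  ring_nf

lemma bhat1_eq_sum_Ico {N M : ℕ} (hNM : N = 2 * M) (p : ℕ) (n : ℤ) :
    bhat1 N p n = ∑ j ∈ Ico (-(M : ℤ)) M, ww N ^ (-(j * n)) * (bspline p (j / 2) / 2 : ℂ) := by
  rw [bhat1, sum_range_sub_half hNM (fun j ↦ ww N ^ (-(j * n)) * bs1 N p j)]
  refine sum_congr rfl fun j hj ↦ ?_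
  rw [mem_Ico] at hj
  rw [bs1, show (N : ℤ) / 2 = M by omega, Int.emod_eq_of_lt (by omega) (by omega)]
  push_cast
  ring_nf

lemma bhat1_eq_half_add {N M p : ℕ} (hNM : N = 2 * M) (hp : 2 ≤ p) (hpM : p ≤ M) (n : ℤ) :
    bhat1 N p n = (uSeq N p (2 * n) + vSeq N p (2 * n)) / 2 := by
  have hM : M ≠ 0 := by omega
  set f : ℤ → ℂ := fun j ↦ ww N ^ (-(j * n)) * (bspline p (j / 2) / 2 : ℂ)
  calc bhat1 N p n = ∑ j ∈ Ico (-(M : ℤ)) M, f j := bhat1_eq_sum_Ico hNM p n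
    _ = ∑ j ∈ Ico (2 * -(M : ℤ)) (2 * M), f j := by
        refine sum_subset (Ico_subset_Ico (by omega) (by omega)) fun j hj hj' ↦ ?_
        simp only [mem_Ico] at hj hj'
        simp [f, bspline_div_two_eq_zero hp hpM (j := j) (le_abs'.2 (by omega))]
    _ = ∑ i ∈ Ico (-(M : ℤ)) M, (f (2 * i) + f (2 * i + 1)) := sum_Ico_two_mul _ _ f
    _ = (uSeq N p (2 * n) + vSeq N p (2 * n)) / 2 := by
        rw [uSeq_eq_sum_Ico hNM, vSeq_eq_sum_Ico hNM, exp_neg_pi_mul_I_mul_two_mul_div hNM hM,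
          mul_sum, ← sum_add_distrib, sum_div]
        refine sum_congr rfl fun i _ ↦ ?_
        simp only [f]
        rw [show -((2 * i + 1) * n) = -n + -(i * (2 * n)) by ring, zpow_add₀ (ww_ne_zero N),
          show -(2 * i * n) = -(i * (2 * n)) by ring]
        push_cast
        ring_nf

lemma periodic_uSeq (N p : ℕ) : Periodic (uSeq N p) N :=
  periodic_sum_ww_zpow_neg_mul N _ _ _

lemma periodic_bhat1 (N p : ℕ) : Periodic (bhat1 N p) N :=
  periodic_sum_ww_zpow_neg_mul N _ _ _

lemma antiperiodic_vSeq (N p : ℕ) : Antiperiodic (vSeq N p) N := fun n ↦ by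
  rcases eq_or_ne N 0 with rfl | hN
  · simp [vSeq]
  have hsum := periodic_sum_ww_zpow_neg_mul N (range N) (fun k : ℕ ↦ (k : ℤ) - (N : ℤ) / 2)
    (fun k ↦ (bspline p ((k : ℝ) - (N : ℝ) / 2 + 1 / 2) : ℂ)) n
  simp only at hsum
  rw [vSeq, vSeq, hsum]
  have hphase : Complex.exp (-Real.pi * Complex.I * ((n + N : ℤ) : ℂ) / N)
      = -Complex.exp (-Real.pi * Complex.I * (n : ℂ) / N) := by
    rw [← Complex.exp_sub_pi_mul_I]
    congr 1
    push_cast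
    field_simp
    ring
  rw [hphase, neg_mul]

lemma bhat1_add_half {N M p : ℕ} (hNM : N = 2 * M) (hp : 2 ≤ p) (hpM : p ≤ M) (n : ℤ) :
    bhat1 N p (n + M) = (uSeq N p (2 * n) - vSeq N p (2 * n)) / 2 := by
  rw [bhat1_eq_half_add hNM hp hpM, show 2 * (n + M) = 2 * n + N by omega, periodic_uSeq,
    antiperiodic_vSeq, sub_eq_add_neg]

lemma periodic_upsilon_half {N M : ℕ} (hNM : N = 2 * M) (p : ℕ) : Periodic (upsilon N p) M :=
  fun n ↦ by
    rw [upsilon, upsilon, show 2 * (n + M) = 2 * n + N by omega, periodic_uSeq,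
      antiperiodic_vSeq, neg_sq]

lemma conj_bhat1 {N M p : ℕ} (hNM : N = 2 * M) (hp : 2 ≤ p) (hpM : p ≤ M) (n : ℤ) :
    conj (bhat1 N p n) = bhat1 N p n := by
  have hIcc : bhat1 N p n
      = ∑ j ∈ Icc (-(M : ℤ)) M, ww N ^ (-(j * n)) * (bspline p (j / 2) / 2 : ℂ) := by
    rw [bhat1_eq_sum_Ico hNM]
    refine sum_subset Ico_subset_Icc_self fun j hj hj' ↦ ?_
    simp only [mem_Icc, mem_Ico] at hj hj'
    simp [bspline_div_two_eq_zero hp hpM (j := j) (le_abs'.2 (by omega))]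
  rw [hIcc, map_sum, ← sum_Icc_neg]
  refine sum_congr rfl fun j _ ↦ ?_
  simp only [map_mul, conj_ww_zpow, map_div₀, Complex.conj_ofReal, map_ofNat, neg_mul, neg_neg,
    Int.cast_neg, neg_div, bspline_neg hp]

lemma conj_cpow_one_div_two_of_pos {z : ℂ} (hz : 0 < z) :
    conj (z ^ (1 / 2 : ℂ)) = z ^ (1 / 2 : ℂ) := by
  have hz' : z = (z.re : ℂ) := Complex.eq_re_of_ofReal_le (by rw [Complex.ofReal_zero]; exact hz.le)
  rw [hz', show (1 / 2 : ℂ) = ((1 / 2 : ℝ) : ℂ) by push_cast; rfl,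
    ← Complex.ofReal_cpow (Complex.pos_iff.1 hz).1.le, Complex.conj_ofReal]

lemma cpow_one_div_two_sq (z : ℂ) : (z ^ (1 / 2 : ℂ)) ^ 2 = z := by
  rw [one_div]
  exact Complex.cpow_ofNat_inv_pow z 2

lemma upsilon_pos {N p : ℕ} (hpos : ∀ n : ℤ, 0 < uSeq N p (2 * n) ^ 2 + vSeq N p (2 * n) ^ 2)
    (n : ℤ) : 0 < upsilon N p n :=
  div_pos (hpos n) four_pos

lemma periodic_betaS {N M : ℕ} (hNM : N = 2 * M) (p : ℕ) : Periodic (betaS N p) N := fun n ↦ by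
  have hU : Periodic (upsilon N p) N := by
    have := (periodic_upsilon_half hNM p).nat_mul 2
    rwa [show ((2 : ℕ) : ℤ) * M = N by omega] at this
  rw [betaS, betaS, periodic_bhat1, hU]

lemma periodic_alphaS {N M : ℕ} (hNM : N = 2 * M) (p : ℕ) : Periodic (alphaS N p) N := fun n ↦ by
  rw [alphaS, alphaS, add_right_comm, periodic_betaS hNM]
  congr 1
  simpa using ww_zpow_add_mul_natCast N n 1

section Wavelet

variable {N M p : ℕ}

lemma conj_betaS (hNM : N = 2 * M) (hp : 2 ≤ p) (hpM : p ≤ M)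
    (hpos : ∀ n : ℤ, 0 < uSeq N p (2 * n) ^ 2 + vSeq N p (2 * n) ^ 2) (n : ℤ) :
    conj (betaS N p n) = betaS N p n := by
  rw [betaS, map_div₀, conj_bhat1 hNM hp hpM, conj_cpow_one_div_two_of_pos (upsilon_pos hpos n)]

lemma betaS_sq_add_betaS_add_half_sq (hNM : N = 2 * M) (hp : 2 ≤ p) (hpM : p ≤ M)
    (hpos : ∀ n : ℤ, 0 < uSeq N p (2 * n) ^ 2 + vSeq N p (2 * n) ^ 2) (n : ℤ) :
    betaS N p n ^ 2 + betaS N p (n + M) ^ 2 = 2 := by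
  have hU := (upsilon_pos hpos n).ne'
  rw [betaS, betaS, periodic_upsilon_half hNM, div_pow, div_pow, cpow_one_div_two_sq,
    bhat1_eq_half_add hNM hp hpM, bhat1_add_half hNM hp hpM, ← add_div, div_eq_iff hU, upsilon]
  ring

noncomputable def psiCoeff (N p lam n : ℕ) : ℂ := if lam = 0 then betaS N p n else alphaS N p n

lemma sum_conj_psiCoeff_mul_self (hNM : N = 2 * M) (hp : 2 ≤ p) (hpM : p ≤ M)
    (hpos : ∀ n : ℤ, 0 < uSeq N p (2 * n) ^ 2 + vSeq N p (2 * n) ^ 2) (n : ℕ) :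
    ∑ lam ∈ range 2, conj (psiCoeff N p lam n) * psiCoeff N p lam n = 2 := by
  rw [sum_range_succ, sum_range_one]
  simp only [psiCoeff, if_pos, one_ne_zero, if_false]
  rw [alphaS, map_mul, conj_ww_zpow, conj_betaS hNM hp hpM hpos, conj_betaS hNM hp hpM hpos,
    show (N : ℤ) / 2 = M by omega]
  linear_combination betaS_sq_add_betaS_add_half_sq hNM hp hpM hpos n
    + betaS N p (n + M) ^ 2 * zpow_neg_mul_zpow_self (n : ℤ) (ww_ne_zero N)

lemma sum_conj_psiCoeff_mul_shiftHalf (hNM : N = 2 * M) (hp : 2 ≤ p) (hpM : p ≤ M)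
    (hpos : ∀ n : ℤ, 0 < uSeq N p (2 * n) ^ 2 + vSeq N p (2 * n) ^ 2) (n : ℕ) :
    ∑ lam ∈ range 2, conj (psiCoeff N p lam n) * psiCoeff N p lam (shiftHalf M n) = 0 := by
  have hα : alphaS N p (n + M) = -(ww N ^ (n : ℤ) * betaS N p n) := by
    rw [alphaS, show (N : ℤ) / 2 = M by omega, zpow_add₀ (ww_ne_zero N),
      ww_zpow_half hNM (by omega), add_assoc, ← two_mul, show 2 * (M : ℤ) = N by omega,
      periodic_betaS hNM]
    ring
  rw [sum_range_succ, sum_range_one]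
  simp only [psiCoeff, if_pos, one_ne_zero, if_false]
  rw [periodic_apply_shiftHalf hNM (periodic_betaS hNM p),
    periodic_apply_shiftHalf hNM (periodic_alphaS hNM p), hα, alphaS, map_mul, conj_ww_zpow,
    conj_betaS hNM hp hpM hpos, conj_betaS hNM hp hpM hpos,
    show (N : ℤ) / 2 = M by omega]
  linear_combination
    -betaS N p n * betaS N p (n + M) * zpow_neg_mul_zpow_self (n : ℤ) (ww_ne_zero N)

end Wavelet

noncomputable def qwpCoeff (N p : ℕ) (t : ℂ) (lam n : ℕ) : ℂ :=
  (1 + t * cwpMult N n) * psiCoeff N p lam n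

lemma psi1_eq_idft (N p lam : ℕ) : psi1 N p lam = idft N (psiCoeff N p lam) := rfl

lemma qwpP_eq_idft (N p lam : ℕ) : qwpP N p lam = idft N (qwpCoeff N p Complex.I lam) :=
  funext fun k ↦ by
    rw [qwpP, psi1_eq_idft]
    exact idft_add_mul_cwpT N (psiCoeff N p lam) Complex.I k

lemma qwpM_eq_idft (N p lam : ℕ) : qwpM N p lam = idft N (qwpCoeff N p (-Complex.I) lam) :=
  funext fun k ↦ by
    rw [qwpM, psi1_eq_idft, sub_eq_add_neg, ← neg_mul]
    exact idft_add_mul_cwpT N (psiCoeff N p lam) (-Complex.I) k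

theorem sum_sum_inner1_qwp_mul_qwp {N M p : ℕ} (hNM : N = 2 * M) (hp : 2 ≤ p) (hpM : p ≤ M)
    (hpos : ∀ n : ℤ, 0 < uSeq N p (2 * n) ^ 2 + vSeq N p (2 * n) ^ 2)
    {x : ℤ → ℂ} (hx : Periodic x N) {t : ℂ} (ht : t = Complex.I ∨ t = -Complex.I) (k : ℤ) :
    ∑ lam ∈ range 2, ∑ l ∈ range M, inner1 N x (fun j ↦ idft N (qwpCoeff N p t lam) (j - 2 * l))
        * idft N (qwpCoeff N p t lam) (k - 2 * l)
      = 2 * (x k + t * hilbertT N x k) := by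
  have hsplit : ∀ n m, ∑ lam ∈ range 2, conj (qwpCoeff N p t lam n) * qwpCoeff N p t lam m
      = conj (1 + t * cwpMult N n) * (1 + t * cwpMult N m)
        * ∑ lam ∈ range 2, conj (psiCoeff N p lam n) * psiCoeff N p lam m := fun n m ↦ by
    simp only [qwpCoeff, map_mul, mul_sum]
    exact sum_congr rfl fun _ _ ↦ by ring
  rw [sum_sum_range_inner1_idft_mul_idft (range 2) hNM _ (fun n ↦ 4 * (1 + t * hilbertMult N n))
    (fun n hn ↦ by rw [hsplit, conj_mul_self_one_add_mul_cwpMult hn ht,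
      sum_conj_psiCoeff_mul_self hNM hp hpM hpos]; ring)
    (fun n _ ↦ by rw [hsplit, sum_conj_psiCoeff_mul_shiftHalf hNM hp hpM hpos, mul_zero]),
    hilbertT_eq_idft, ← idft_dft (by omega) hx k]
  simp only [idft, mul_sum, ← sum_add_distrib]
  exact sum_congr rfl fun n _ ↦ by ring

lemma eq_ofReal_re_half_mul_two_mul_add {z w : ℂ} (hz : z.im = 0) (hw : w.im = 0) :
    z = ((1 / 2 * (2 * (z + Complex.I * w))).re : ℂ) ∧
      z = ((1 / 2 * (2 * (z - Complex.I * w))).re : ℂ) := by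
  constructor <;> apply Complex.ext <;> simp [hz, hw]

theorem qwp_frame_analytic_general (N p : ℕ) (hNe : Even N)
    (hp : 2 ≤ p) (hpN : p ≤ N / 2)
    (hpos : ∀ n : ℤ, 0 < uSeq N p (2 * n) ^ 2 + vSeq N p (2 * n) ^ 2)
    (x : ℤ → ℂ) (hper : ∀ k : ℤ, x (k + N) = x k) :
    (∀ k : ℤ,
      (∑ lam ∈ Finset.range 2, ∑ l ∈ Finset.range (N / 2),
          inner1 N x (fun j => qwpP N p lam (j - 2 * (l : ℤ))) * qwpP N p lam (k - 2 * (l : ℤ)))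
        = 2 * (x k + Complex.I * hilbertT N x k)) ∧
    (∀ k : ℤ,
      (∑ lam ∈ Finset.range 2, ∑ l ∈ Finset.range (N / 2),
          inner1 N x (fun j => qwpM N p lam (j - 2 * (l : ℤ))) * qwpM N p lam (k - 2 * (l : ℤ)))
        = 2 * (x k - Complex.I * hilbertT N x k)) ∧
    ((∀ k : ℤ, (x k).im = 0) → ∀ k : ℤ,
      x k = ((((1 : ℂ) / 2) * ∑ lam ∈ Finset.range 2, ∑ l ∈ Finset.range (N / 2),
          inner1 N x (fun j => qwpP N p lam (j - 2 * (l : ℤ))) *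
            qwpP N p lam (k - 2 * (l : ℤ))).re : ℂ) ∧
      x k = ((((1 : ℂ) / 2) * ∑ lam ∈ Finset.range 2, ∑ l ∈ Finset.range (N / 2),
          inner1 N x (fun j => qwpM N p lam (j - 2 * (l : ℤ))) *
            qwpM N p lam (k - 2 * (l : ℤ))).re : ℂ)) := by
  obtain ⟨M, hM⟩ := hNe
  have hNM : N = 2 * M := by omega
  rw [show N / 2 = M by omega] at hpN ⊢
  have hplus : ∀ k : ℤ, ∑ lam ∈ range 2, ∑ l ∈ range M,
      inner1 N x (fun j ↦ qwpP N p lam (j - 2 * l)) * qwpP N p lam (k - 2 * l)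
        = 2 * (x k + Complex.I * hilbertT N x k) := fun k ↦ by
    simpa only [qwpP_eq_idft] using
      sum_sum_inner1_qwp_mul_qwp hNM hp hpN hpos hper (Or.inl rfl) k
  have hminus : ∀ k : ℤ, ∑ lam ∈ range 2, ∑ l ∈ range M,
      inner1 N x (fun j ↦ qwpM N p lam (j - 2 * l)) * qwpM N p lam (k - 2 * l)
        = 2 * (x k - Complex.I * hilbertT N x k) := fun k ↦ by
    simpa only [qwpM_eq_idft, neg_mul, ← sub_eq_add_neg] using
      sum_sum_inner1_qwp_mul_qwp hNM hp hpN hpos hper (Or.inr rfl) k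
  refine ⟨hplus, hminus, fun hreal k ↦ ?_⟩
  rw [hplus, hminus]
  exact eq_ofReal_re_half_mul_two_mul_add (hreal k) (hilbertT_im_eq_zero hNM hreal k)

/-- The frame operators of the quasi-analytic wavelet packets produce the
    analytic signals: Σ_{λ,l} ⟨x,Ψ_{±,λ}[·−2l]⟩ Ψ_{±,λ}[k−2l] = 2(x[k] ± i·H(x)[k]);
    in particular a real-valued x is the real part of (1/2)·Σ_{λ,l} ⟨x,Ψ_{±,λ}[·−2l]⟩ Ψ_{±,λ}[·−2l]. -/
theorem qwp_frame_analytic (N p : ℕ) (hN : 0 < N) (hNe : Even N)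
    (hp : 2 ≤ p) (hpN : p ≤ N / 2)
    (hpos : ∀ n : ℤ, 0 < uSeq N p (2 * n) ^ 2 + vSeq N p (2 * n) ^ 2)
    (x : ℤ → ℂ) (hper : ∀ k : ℤ, x (k + N) = x k) :
    (∀ k : ℤ,
      (∑ lam ∈ Finset.range 2, ∑ l ∈ Finset.range (N / 2),
          inner1 N x (fun j => qwpP N p lam (j - 2 * (l : ℤ))) * qwpP N p lam (k - 2 * (l : ℤ)))
        = 2 * (x k + Complex.I * hilbertT N x k)) ∧
    (∀ k : ℤ,
      (∑ lam ∈ Finset.range 2, ∑ l ∈ Finset.range (N / 2),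
          inner1 N x (fun j => qwpM N p lam (j - 2 * (l : ℤ))) * qwpM N p lam (k - 2 * (l : ℤ)))
        = 2 * (x k - Complex.I * hilbertT N x k)) ∧
    ((∀ k : ℤ, (x k).im = 0) → ∀ k : ℤ,
      x k = ((((1 : ℂ) / 2) * ∑ lam ∈ Finset.range 2, ∑ l ∈ Finset.range (N / 2),
          inner1 N x (fun j => qwpP N p lam (j - 2 * (l : ℤ))) *
            qwpP N p lam (k - 2 * (l : ℤ))).re : ℂ) ∧
      x k = ((((1 : ℂ) / 2) * ∑ lam ∈ Finset.range 2, ∑ l ∈ Finset.range (N / 2),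
          inner1 N x (fun j => qwpM N p lam (j - 2 * (l : ℤ))) *
            qwpM N p lam (k - 2 * (l : ℤ))).re : ℂ)) :=
  qwp_frame_analytic_general N p hNe hp hpN hpos x hper

end WP
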